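/- arXiv:2403.08522 — 5 statements merged into one kernel-verified Lean document; each statement's English description precedes it below -/
import Mathlib

section
/- Fix a natural number a ≥ 2 and densities d, d' ∈ (0,1) with d + d' > 1. Let A ⊆ ℕ be infinite and let 𝓛 be a set of words over Fin a with A-density d'. For each L ∈ ℕ let μ_L be the law of a random set of relators at density d and length L (the product over Fin N_L, with N_L = ⌈a^(d·L)⌉, of the uniform probability measure on Fin L → Fin a). Then the probability that at least one sampled word belongs to 𝓛 tends to 1 as L → ∞ along A; formally, Tendsto (fun L => μ_L {ω | ∃ i, List.ofFn (ω i) ∈ 𝓛}) (atTop ⊓ 𝓟 A) (nhds 1). -/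
/-!
A uniformly random word of length `L ∈ A` lies in `𝓛` with probability
`t_L ≥ c·a^(d'L) / a^L`. The `N_L ≥ a^(dL)` independent samples all miss `𝓛` with probability
`(1 - t_L)^(N_L) ≤ exp(-t_L N_L) ≤ exp(-c·a^((d + d' - 1)L))`, which tends to `0` because
`d + d' > 1`.
-/

open MeasureTheory ENNReal

/-- The uniform probability measure on words of length `L` over `Fin a`
(words identified with functions `Fin L → Fin a`). -/
noncomputable def uniformWords (a L : ℕ) : Measure (Fin L → Fin a) :=
  ((Fintype.card (Fin L → Fin a) : ℝ≥0∞))⁻¹ • Measure.count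

/-- The law of a random set of relators at density `d` and length `L` over `Fin a`:
`N_L = ⌈a^(d·L)⌉` independent uniformly random words of length `L`. -/
noncomputable def relatorLaw (a : ℕ) (d : ℝ) (L : ℕ) :
    Measure (Fin ⌈(a : ℝ) ^ (d * (L : ℝ))⌉₊ → (Fin L → Fin a)) :=
  Measure.pi fun _ => uniformWords a L

/-- The number of words of length `L` in the language `𝓛`. -/
noncomputable def langCount {a : ℕ} (𝓛 : Set (List (Fin a))) (L : ℕ) : ℕ :=
  open Classical in
  (Finset.univ.filter fun f : Fin L → Fin a => List.ofFn f ∈ 𝓛).card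

/-- A language `𝓛` over `Fin a` has `A`-density `d` if for some `c > 0`,
`𝓛` contains at least `c·a^(d·L)` words of length `L` for each `L ∈ A`. -/
def HasADensity (a : ℕ) (A : Set ℕ) (d : ℝ) (𝓛 : Set (List (Fin a))) : Prop :=
  ∃ c : ℝ, 0 < c ∧ ∀ L ∈ A,
    c * (a : ℝ) ^ (d * (L : ℝ)) ≤ (langCount 𝓛 L : ℝ)

open Filter Topology

instance uniformWords.instIsProbabilityMeasure (a L : ℕ) [NeZero a] :
    IsProbabilityMeasure (uniformWords a L) := by
  constructor
  rw [uniformWords, Measure.smul_apply, smul_eq_mul, Measure.count_univ,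
    ENat.card_eq_coe_fintype_card, ENat.toENNReal_coe]
  exact ENNReal.inv_mul_cancel (by simp [NeZero.ne a]) (by simp)

instance relatorLaw.instIsProbabilityMeasure (a : ℕ) [NeZero a] (d : ℝ) (L : ℕ) :
    IsProbabilityMeasure (relatorLaw a d L) := by
  rw [relatorLaw]
  infer_instance

lemma uniformWords_setOf_ofFn_mem (a L : ℕ) (𝓛 : Set (List (Fin a))) :
    uniformWords a L {f | List.ofFn f ∈ 𝓛} = langCount 𝓛 L / (a : ℝ≥0∞) ^ L := by
  classical
  rw [uniformWords, Measure.smul_apply, smul_eq_mul,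
    Measure.count_apply_finite _ (Set.toFinite _), ENNReal.div_eq_inv_mul, langCount, Set.toFinite_toFinset, Set.toFinset_ofPred]
  simp

section IndependentSampling

variable {ι α : Type*} [Fintype ι] [MeasurableSpace α] (μ : Measure α) [IsProbabilityMeasure μ]
  {S : Set α}

lemma Measure.pi_setOf_exists_mem (hS : MeasurableSet S) :
    Measure.pi (fun _ : ι => μ) {ω | ∃ i, ω i ∈ S} = 1 - μ Sᶜ ^ Fintype.card ι := by
  have hmiss : {ω : ι → α | ∃ i, ω i ∈ S} = (Set.univ.pi fun _ => Sᶜ)ᶜ := by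
    ext ω
    simp
  rw [hmiss, prob_compl_eq_one_sub (MeasurableSet.univ_pi fun _ => hS.compl), Measure.pi_pi,
    Finset.prod_const, Finset.card_univ]

lemma measure_compl_le_exp_neg (hS : MeasurableSet S) {t : ℝ} (ht : 0 ≤ t)
    (htS : ENNReal.ofReal t ≤ μ S) : μ Sᶜ ≤ ENNReal.ofReal (Real.exp (-t)) :=
  calc μ Sᶜ = 1 - μ S := prob_compl_eq_one_sub hS
    _ ≤ 1 - ENNReal.ofReal t := tsub_le_tsub_left htS 1
    _ = ENNReal.ofReal (1 - t) := by rw [ENNReal.ofReal_sub 1 ht, ENNReal.ofReal_one]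
    _ ≤ ENNReal.ofReal (Real.exp (-t)) :=
      ENNReal.ofReal_le_ofReal (by linarith [Real.add_one_le_exp (-t)])

lemma one_sub_exp_le_pi_setOf_exists_mem (hS : MeasurableSet S) {t : ℝ} (ht : 0 ≤ t)
    (htS : ENNReal.ofReal t ≤ μ S) :
    1 - ENNReal.ofReal (Real.exp (-(t * Fintype.card ι))) ≤
      Measure.pi (fun _ : ι => μ) {ω | ∃ i, ω i ∈ S} := by
  rw [Measure.pi_setOf_exists_mem μ hS]
  refine tsub_le_tsub_left ?_ 1
  calc μ Sᶜ ^ Fintype.card ι ≤ ENNReal.ofReal (Real.exp (-t)) ^ Fintype.card ι :=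
        pow_le_pow_left₀ zero_le (measure_compl_le_exp_neg μ hS ht htS) _
    _ = ENNReal.ofReal (Real.exp (-(t * Fintype.card ι))) := by
        rw [← ENNReal.ofReal_pow (Real.exp_pos _).le, ← Real.exp_nat_mul]
        ring_nf

end IndependentSampling

lemma one_sub_exp_le_relatorLaw {a : ℕ} [NeZero a] (d d' : ℝ) {c : ℝ} (hc : 0 ≤ c)
    {𝓛 : Set (List (Fin a))} {L : ℕ} (hL : c * (a : ℝ) ^ (d' * L) ≤ langCount 𝓛 L) :
    1 - ENNReal.ofReal (Real.exp (-(c * (a : ℝ) ^ ((d + d' - 1) * L)))) ≤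
      relatorLaw a d L {ω | ∃ i, List.ofFn (ω i) ∈ 𝓛} := by
  have ha : (0 : ℝ) < a := by simp [Nat.pos_of_neZero a]
  set t := c * (a : ℝ) ^ (d' * L) / (a : ℝ) ^ L
  have ht : 0 ≤ t := by positivity
  have htS : ENNReal.ofReal t ≤ uniformWords a L {f | List.ofFn f ∈ 𝓛} := by
    rw [uniformWords_setOf_ofFn_mem, ENNReal.ofReal_div_of_pos (by positivity),
      ENNReal.ofReal_pow ha.le, ENNReal.ofReal_natCast]
    gcongr
    simpa using ENNReal.ofReal_le_ofReal hL
  have htN : c * (a : ℝ) ^ ((d + d' - 1) * L) ≤ t * ⌈(a : ℝ) ^ (d * L)⌉₊ :=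
    calc c * (a : ℝ) ^ ((d + d' - 1) * L) = t * (a : ℝ) ^ (d * L) := by
          simp only [t]
          rw [← Real.rpow_natCast, mul_div_assoc, ← Real.rpow_sub ha, mul_assoc,
            ← Real.rpow_add ha]
          ring_nf
      _ ≤ t * ⌈(a : ℝ) ^ (d * L)⌉₊ := mul_le_mul_of_nonneg_left (Nat.le_ceil _) ht
  calc 1 - ENNReal.ofReal (Real.exp (-(c * (a : ℝ) ^ ((d + d' - 1) * L))))
      ≤ 1 - ENNReal.ofReal (Real.exp (-(t * ⌈(a : ℝ) ^ (d * L)⌉₊))) := by gcongr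
    _ ≤ relatorLaw a d L {ω | ∃ i, List.ofFn (ω i) ∈ 𝓛} := by
      simpa [relatorLaw] using one_sub_exp_le_pi_setOf_exists_mem
        (ι := Fin ⌈(a : ℝ) ^ (d * L)⌉₊) (uniformWords a L) (Set.to_countable _).measurableSet ht htS

lemma tendsto_exp_neg_mul_rpow_mul_natCast {b c e : ℝ} (hb : 1 < b) (hc : 0 < c) (he : 0 < e) :
    Tendsto (fun n : ℕ => Real.exp (-(c * b ^ (e * n)))) atTop (𝓝 0) :=
  Real.tendsto_exp_neg_atTop_nhds_zero.comp <| Tendsto.const_mul_atTop hc <|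
    (tendsto_rpow_atTop_of_base_gt_one b hb).comp <|
      tendsto_natCast_atTop_atTop.const_mul_atTop he

theorem stmt0_general (a : ℕ) (ha : 2 ≤ a) (d d' : ℝ)
    (hdd : 1 < d + d')
    (A : Set ℕ) (𝓛 : Set (List (Fin a)))
    (hdens : HasADensity a A d' 𝓛) :
    Filter.Tendsto
      (fun L : ℕ => relatorLaw a d L {ω | ∃ i, List.ofFn (ω i) ∈ 𝓛})
      (Filter.atTop ⊓ Filter.principal A) (nhds 1) := by
  obtain ⟨c, hc, hcL⟩ := hdens
  have : NeZero a := ⟨by omega⟩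
  have hexp := tendsto_exp_neg_mul_rpow_mul_natCast (b := a) (by exact_mod_cast ha) hc
    (sub_pos.2 hdd)
  have hlower : Tendsto
      (fun L : ℕ => 1 - ENNReal.ofReal (Real.exp (-(c * (a : ℝ) ^ ((d + d' - 1) * L)))))
      (atTop ⊓ 𝓟 A) (𝓝 1) := by
    simpa using ENNReal.Tendsto.sub tendsto_const_nhds
      ((ENNReal.tendsto_ofReal hexp).mono_left inf_le_left) (Or.inl ENNReal.one_ne_top)
  refine tendsto_of_tendsto_of_tendsto_of_le_of_le' hlower tendsto_const_nhds ?_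
    (Eventually.of_forall fun _ => prob_le_one)
  filter_upwards [mem_inf_of_right (mem_principal_self A)] with L hL
  exact one_sub_exp_le_relatorLaw d d' hc.le (hcL L hL)

/-- if `d + d' > 1`, `A ⊆ ℕ` is infinite and `𝓛` has `A`-density `d'`,
then the probability that a random set of relators at density `d` and length `L`
meets `𝓛` tends to `1` as `L → ∞` along `A`. -/
theorem stmt0 (a : ℕ) (ha : 2 ≤ a) (d d' : ℝ)
    (hd : d ∈ Set.Ioo (0 : ℝ) 1) (hd' : d' ∈ Set.Ioo (0 : ℝ) 1) (hdd : 1 < d + d')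
    (A : Set ℕ) (hA : A.Infinite) (𝓛 : Set (List (Fin a)))
    (hdens : HasADensity a A d' 𝓛) :
    Filter.Tendsto
      (fun L : ℕ => relatorLaw a d L {ω | ∃ i, List.ofFn (ω i) ∈ 𝓛})
      (Filter.atTop ⊓ Filter.principal A) (nhds 1) :=
  stmt0_general a ha d d' hdd A 𝓛 hdens
end

section
/- For all real numbers a > 1, c > 0 and d, d' ∈ (0,1) with d + d' > 1, the real sequence L ↦ (1 − min 1 (c · a^((d'−1)·L)))^(⌈a^(d·L)⌉) (indexed by natural numbers L, with natural-number exponent ⌈a^(d·L)⌉) tends to 0 as L → ∞. -/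
/-- For all real `a > 1`, `c > 0` and `d, d' ∈ (0,1)` with `d + d' > 1`,
the sequence `L ↦ (1 − min 1 (c · a^((d'−1)·L)))^(⌈a^(d·L)⌉)` tends to `0` as `L → ∞`. -/
theorem stmt1 (a c d d' : ℝ) (ha : 1 < a) (hc : 0 < c)
    (hd : d ∈ Set.Ioo (0 : ℝ) 1) (hd' : d' ∈ Set.Ioo (0 : ℝ) 1) (hdd : 1 < d + d') :
    Filter.Tendsto
      (fun L : ℕ => (1 - min 1 (c * a ^ ((d' - 1) * (L : ℝ)))) ^ ⌈a ^ (d * (L : ℝ))⌉₊)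
      Filter.atTop (nhds 0) := by
  have ha0 : (0:ℝ) < a := by linarith
  have hla : 0 < Real.log a := Real.log_pos ha
  -- helper: for any e : ℝ, a ^ (e * L) = exp ((e * log a) * L)
  have hrw : ∀ (e : ℝ) (L : ℕ), a ^ (e * (L:ℝ)) = Real.exp ((e * Real.log a) * L) := by
    intro e L
    rw [Real.rpow_def_of_pos ha0]
    ring_nf
  -- c * a ^ ((d'-1) L) → 0
  have hx0 : Filter.Tendsto (fun L : ℕ => c * a ^ ((d' - 1) * (L : ℝ)))
      Filter.atTop (nhds 0) := by
    have h1 : Filter.Tendsto (fun L : ℕ => ((d' - 1) * Real.log a) * (L:ℝ))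
        Filter.atTop Filter.atBot := by
      exact Filter.Tendsto.const_mul_atTop_of_neg (by nlinarith [hd'.2])
        tendsto_natCast_atTop_atTop
    have h2 := Real.tendsto_exp_atBot.comp h1
    have h3 : Filter.Tendsto (fun L : ℕ => a ^ ((d' - 1) * (L : ℝ)))
        Filter.atTop (nhds 0) := by
      convert h2 using 2 with L
      exact hrw _ L
    simpa using h3.const_mul c
  -- eventually c * a ^ ((d'-1) L) ≤ 1
  have hev : ∀ᶠ L : ℕ in Filter.atTop, c * a ^ ((d' - 1) * (L : ℝ)) ≤ 1 := by
    have := hx0.eventually (eventually_le_nhds (show (0:ℝ) < 1 by norm_num))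
    simpa using this
  -- bounding sequence g L = exp (-(c * a ^ ((d + d' - 1) * L))) → 0
  have hg : Filter.Tendsto (fun L : ℕ => Real.exp (-(c * a ^ ((d + d' - 1) * (L:ℝ)))))
      Filter.atTop (nhds 0) := by
    apply Real.tendsto_exp_atBot.comp
    apply Filter.tendsto_neg_atBot_iff.mpr
    have h1 : Filter.Tendsto (fun L : ℕ => ((d + d' - 1) * Real.log a) * (L:ℝ))
        Filter.atTop Filter.atTop := by
      exact Filter.Tendsto.const_mul_atTop (by nlinarith) tendsto_natCast_atTop_atTop
    have h2 := Real.tendsto_exp_atTop.comp h1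
    have h3 : Filter.Tendsto (fun L : ℕ => a ^ ((d + d' - 1) * (L : ℝ)))
        Filter.atTop Filter.atTop := by
      convert h2 using 2 with L
      exact hrw _ L
    exact h3.const_mul_atTop hc
  -- squeeze
  refine squeeze_zero' ?_ ?_ hg
  · filter_upwards with L
    apply pow_nonneg
    have : min 1 (c * a ^ ((d' - 1) * (L : ℝ))) ≤ 1 := min_le_left _ _
    linarith
  · filter_upwards [hev] with L hL
    set x := c * a ^ ((d' - 1) * (L : ℝ)) with hxdef
    have hx0' : 0 ≤ x := by positivity
    rw [min_eq_right hL]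
    have h1 : (1 - x) ^ ⌈a ^ (d * (L : ℝ))⌉₊ ≤ Real.exp (-x) ^ ⌈a ^ (d * (L : ℝ))⌉₊ := by
      apply pow_le_pow_left₀ (by linarith)
      linarith [Real.add_one_le_exp (-x)]
    rw [← Real.exp_nat_mul] at h1
    refine h1.trans (Real.exp_le_exp.mpr ?_)
    have hN : a ^ (d * (L : ℝ)) ≤ (⌈a ^ (d * (L : ℝ))⌉₊ : ℝ) := Nat.le_ceil _
    have key : c * a ^ ((d + d' - 1) * (L:ℝ)) ≤ (⌈a ^ (d * (L : ℝ))⌉₊ : ℝ) * x := by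
      have hsplit : a ^ ((d + d' - 1) * (L:ℝ)) = a ^ (d * (L:ℝ)) * a ^ ((d' - 1) * (L:ℝ)) := by
        rw [← Real.rpow_add ha0]; ring_nf
      have : c * a ^ ((d + d' - 1) * (L:ℝ)) = a ^ (d * (L:ℝ)) * x := by
        rw [hxdef, hsplit]; ring
      rw [this]
      exact mul_le_mul_of_nonneg_right hN hx0'
    linarith
end

section
/- For every integer i ≥ 1 and every integer j with 0 ≤ j < i, the function ε₀ ↦ D_i(j)(ε₀) tends to 1 as ε₀ → 0 from the right; formally, Tendsto (fun ε₀ => D ε₀ i j) (nhdsWithin 0 (Set.Ioi 0)) (nhds 1). -/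
/-- The doubly-indexed array `D ε i j` (meaningful for `1 ≤ i` and `j < i`),
defined by recursion on `i + j`:
`D ε 1 0 = 1 - 3ε`;
for `i ≥ 2` and `j < i - 1`, `D ε i j = (1-ε)·D ε (i-1) j - Σ_{k<j} (1 - D ε i k)`;
and `D ε i (i-1) = 1 - 3ε - Σ_{k<i-1} (1 - D ε i k)`. -/
noncomputable def D (ε : ℝ) : ℕ → ℕ → ℝ
  | 0, _ => 0
  | (i + 1), j =>
    if j = i then
      (1 - 3 * ε) - ∑ k ∈ (Finset.range j).attach, (1 - D ε (i + 1) k.1)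
    else
      (1 - ε) * D ε i j - ∑ k ∈ (Finset.range j).attach, (1 - D ε (i + 1) k.1)
  termination_by i j => i + j
  decreasing_by
    all_goals simp_wf
    all_goals exact Finset.mem_range.mp k.2

lemma contD : ∀ n i j, i + j ≤ n → Continuous (fun ε : ℝ => D ε i j) := by
  intro n
  induction n with
  | zero =>
    intro i j h
    obtain ⟨hi, hj⟩ : i = 0 ∧ j = 0 := by omega
    subst hi; subst hj
    simp only [D]
    exact continuous_const
  | succ n ih =>
    intro i j h
    match i with
    | 0 => simp only [D]; exact continuous_const
    | (i + 1) =>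
      by_cases hji : j = i
      · have : (fun ε : ℝ => D ε (i+1) j)
            = fun ε => (1 - 3 * ε) - ∑ k ∈ (Finset.range j).attach, (1 - D ε (i + 1) k.1) := by
          funext ε; rw [D]; simp [hji]
        rw [this]
        refine (continuous_const.sub (continuous_const.mul continuous_id)).sub ?_
        refine continuous_finset_sum _ fun k _ => continuous_const.sub ?_
        exact ih (i+1) k.1 (by have := Finset.mem_range.mp k.2; omega)
      · have : (fun ε : ℝ => D ε (i+1) j)
            = fun ε => (1 - ε) * D ε i j - ∑ k ∈ (Finset.range j).attach, (1 - D ε (i + 1) k.1) := by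
          funext ε; rw [D]; simp [hji]
        rw [this]
        refine ((continuous_const.sub continuous_id).mul (ih i j (by omega))).sub ?_
        refine continuous_finset_sum _ fun k _ => continuous_const.sub ?_
        exact ih (i+1) k.1 (by have := Finset.mem_range.mp k.2; omega)

lemma D0 : ∀ n i j, i + j ≤ n → j < i → D 0 i j = 1 := by
  intro n
  induction n with
  | zero => intro i j h hj; omega
  | succ n ih =>
    intro i j h hj
    match i with
    | (i + 1) =>
      by_cases hji : j = i
      · rw [D]; simp only [hji, if_pos rfl]
        have : ∀ k ∈ (Finset.range i).attach, (1 - D 0 (i+1) k.1) = 0 := by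
          intro k _
          have hk := Finset.mem_range.mp k.2
          rw [ih (i+1) k.1 (by omega) (by omega)]; ring
        rw [hji, Finset.sum_congr rfl this]
        simp
      · rw [D]; simp only [if_neg hji]
        have : ∀ k ∈ (Finset.range j).attach, (1 - D 0 (i+1) k.1) = 0 := by
          intro k _
          have hk := Finset.mem_range.mp k.2
          rw [ih (i+1) k.1 (by omega) (by omega)]; ring
        rw [Finset.sum_congr rfl this, ih i j (by omega) (by omega)]
        simp

/-- For every integer `i ≥ 1` and `0 ≤ j < i`, the function
`ε₀ ↦ D_i(j)(ε₀)` tends to `1` as `ε₀ → 0` from the right. -/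
theorem stmt2 (i j : ℕ) (hi : 1 ≤ i) (hj : j < i) :
    Filter.Tendsto (fun ε₀ : ℝ => D ε₀ i j) (nhdsWithin 0 (Set.Ioi 0)) (nhds 1) := by
  have h := ((contD (i+j) i j le_rfl).tendsto 0).mono_left (nhdsWithin_le_nhds (s := Set.Ioi 0))
  rwa [D0 (i+j) i j le_rfl hj] at h
end

section
/- Let α be a type and let T be a finite nonempty prefix-closed set of lists over α. Assume there is an integer d ≥ 1 such that for every v ∈ T, v has a child (i.e., ∃ s : α, v ++ [s] ∈ T) if and only if v.length < d (every leaf has depth exactly d). Assume the set T₀ = {v ∈ T | v.length < d} (the subtree spanned by the non-leaf vertices) is suffix-closed. Then T is suffix-closed (i.e., T has property (★)) if and only if: for every v ∈ T with v.length = d − 1, every suffix u of v, and every letter s with v ++ [s] ∈ T, also u ++ [s] ∈ T. -/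
/-- A set of words is prefix-closed: closed under taking prefixes. -/
def PrefixClosed {α : Type*} (T : Finset (List α)) : Prop :=
  ∀ u v : List α, u <+: v → v ∈ T → u ∈ T

/-- A set of words is suffix-closed: closed under taking suffixes.
For the tree encoded by `T`, this is exactly property (★): every directed path
has a rooted lift. -/
def SuffixClosed {α : Type*} (T : Finset (List α)) : Prop :=
  ∀ u v : List α, u <:+ v → v ∈ T → u ∈ T

/-- Let `T` be a finite nonempty prefix-closed set of lists over `α`
(encoding a rooted tree with deterministically labeled edges). Assume there is `d ≥ 1`
such that every `v ∈ T` has a child iff `v.length < d` (all leaves have depth exactly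
`d`), and that the subtree `T₀ = {v ∈ T | v.length < d}` spanned by the non-leaf
vertices is suffix-closed. Then `T` is suffix-closed (has property (★)) iff for every
`v ∈ T` of length `d − 1`, every suffix `u` of `v`, and every letter `s` with
`v ++ [s] ∈ T`, also `u ++ [s] ∈ T`. -/
theorem stmt5 {α : Type*} (T : Finset (List α)) (hne : T.Nonempty)
    (hpre : PrefixClosed T) (d : ℕ) (hd : 1 ≤ d)
    (hleaf : ∀ v ∈ T, (∃ s : α, v ++ [s] ∈ T) ↔ v.length < d)
    (hT0 : SuffixClosed (T.filter fun v => v.length < d)) :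
    SuffixClosed T ↔
      ∀ v ∈ T, v.length = d - 1 →
        ∀ u : List α, u <:+ v → ∀ s : α, v ++ [s] ∈ T → u ++ [s] ∈ T := by
  constructor
  · intro hsuf v hv hvlen u huv s hvs
    exact hsuf (u ++ [s]) (v ++ [s]) (by obtain ⟨t, rfl⟩ := huv; exact ⟨t, by simp⟩) hvs
  · intro H
    -- first: every element of T has length ≤ d
    have hnil : ([] : List α) ∈ T := by
      obtain ⟨w, hw⟩ := hne
      exact hpre [] w List.nil_prefix hw
    have hlen : ∀ v ∈ T, v.length ≤ d := by
      intro v hv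
      by_contra h
      push_neg at h
      -- take prefix of length d
      have hpref : v.take d <+: v := List.take_prefix d v
      have htake : v.take d ∈ T := hpre _ v hpref hv
      have hlen' : (v.take d).length = d := by
        simp [List.length_take]
        omega
      have hchild : ∃ s : α, v.take d ++ [s] ∈ T := by
        refine ⟨v.get ⟨d, by omega⟩, ?_⟩
        have : v.take d ++ [v.get ⟨d, by omega⟩] = v.take (d + 1) := by
          rw [List.take_succ]
          simp [List.getElem?_eq_getElem (by omega : d < v.length)]
        rw [this]
        exact hpre _ v (List.take_prefix _ v) hv
      have := (hleaf _ htake).mp hchild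
      omega
    intro u v huv hv
    rcases lt_or_eq_of_le (hlen v hv) with hlt | heq
    · have : v ∈ T.filter fun w => w.length < d := by
        simp [Finset.mem_filter, hv, hlt]
      have := hT0 u v huv this
      exact (Finset.mem_filter.mp this).1
    · -- v has length d ≥ 1, so v = w ++ [s]
      obtain rfl | ⟨w, s, rfl⟩ := v.eq_nil_or_concat
      · simp at heq; omega
      simp only [List.concat_eq_append] at hv heq huv ⊢
      obtain ⟨t, ht⟩ := huv
      have hw : w ∈ T := hpre w (w ++ [s]) ⟨[s], rfl⟩ hv
      have hwlen : w.length = d - 1 := by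
        simp at heq; omega
      obtain rfl | ⟨u', a, rfl⟩ := u.eq_nil_or_concat
      · exact hnil
      · simp only [List.concat_eq_append] at ht ⊢
        have ht' : (t ++ u') ++ [a] = w ++ [s] := by
          rw [← ht]; simp
        have h2 := List.append_inj' ht' (by simp)
        obtain ⟨h3, h4⟩ := h2
        have : a = s := by simpa using h4
        subst this
        exact H w hw hwlen u' ⟨t, h3⟩ a hv
end

section
/- Let α and V be finite types, δ : V → α → Option V a partial transition function, 𝔰 ∈ V a start state, and K, m natural numbers. Suppose that for every word w : List α with w.length ≥ K and reach 𝔰 w = some t, the out-degree of t is at least m. Then for every L ≥ K, the number of words of length L accepted from 𝔰 is at least (the number of words of length K accepted from 𝔰) · m^(L−K). -/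
/-- The run map of a deterministic partial automaton. -/
def reach {V α : Type*} (δ : V → α → Option V) : V → List α → Option V
  | v, [] => some v
  | v, x :: w => (δ v x).bind fun u => reach δ u w

/-- The out-degree of a state `v`: the number of letters on which a transition
from `v` is defined. -/
noncomputable def outDeg {V α : Type*} [Fintype α] (δ : V → α → Option V) (v : V) : ℕ :=
  open Classical in (Finset.univ.filter fun x : α => δ v x ≠ none).card

/-- The number of words of length `L` accepted from the state `v`
(words of length `L` identified with functions `Fin L → α`). -/
noncomputable def acceptedCount {V α : Type*} [Fintype α] (δ : V → α → Option V)
    (v : V) (L : ℕ) : ℕ :=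
  open Classical in
  (Finset.univ.filter fun f : Fin L → α => reach δ v (List.ofFn f) ≠ none).card

/-!
Split a word of length `L + 1` into its prefix of length `L` and its last letter: an accepted
prefix ending in state `t` extends to exactly `outDeg δ t` accepted words. So once every state
reached after `K` or more letters has out-degree at least `m`, each further letter multiplies
the number of accepted words by at least `m`.
-/

lemma List.ofFn_snoc {α : Type*} {n : ℕ} (w : Fin n → α) (x : α) :
    List.ofFn (Fin.snoc w x : Fin (n + 1) → α) = List.ofFn w ++ [x] := by
  rw [List.ofFn_succ_last]
  simp

section Run

variable {V α : Type*} (δ : V → α → Option V)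

lemma reach_append (v : V) (w₁ w₂ : List α) :
    reach δ v (w₁ ++ w₂) = (reach δ v w₁).bind fun u => reach δ u w₂ := by
  induction w₁ generalizing v with
  | nil => rfl
  | cons x w ih => cases h : δ v x <;> simp [reach, h, ih]

lemma reach_append_singleton (v : V) (w : List α) (x : α) :
    reach δ v (w ++ [x]) = (reach δ v w).bind (δ · x) := by
  rw [reach_append]
  congr 1
  funext u
  cases h : δ u x <;> simp [reach, h]

variable [Fintype α]

lemma card_filter_bind_ne_none (o : Option V) :
    open Classical in
    (Finset.univ.filter fun x : α => o.bind (δ · x) ≠ none).card = o.elim 0 (outDeg δ) := by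
  classical
  cases o with
  | none => simp
  | some t => simp [outDeg]

lemma acceptedCount_succ (v : V) (L : ℕ) :
    acceptedCount δ v (L + 1) = ∑ w : Fin L → α, (reach δ v (List.ofFn w)).elim 0 (outDeg δ) := by
  classical
  simp only [acceptedCount, ← card_filter_bind_ne_none, ← reach_append_singleton]
  rw [Finset.card_filter, ← (Fin.snocEquiv fun _ => α).sum_comp, Fintype.sum_prod_type_right]
  simp only [Fin.snocEquiv, Equiv.coe_fn_mk, List.ofFn_snoc, Finset.card_filter]

lemma acceptedCount_mul_le_acceptedCount_succ (v : V) (L m : ℕ)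
    (h : ∀ w : List α, w.length = L → ∀ t : V, reach δ v w = some t → m ≤ outDeg δ t) :
    acceptedCount δ v L * m ≤ acceptedCount δ v (L + 1) := by
  classical
  rw [acceptedCount_succ, acceptedCount, ← smul_eq_mul]
  refine (Finset.card_nsmul_le_sum _ _ _ fun w hw => ?_).trans
    (Finset.sum_le_sum_of_subset (Finset.filter_subset _ _))
  obtain ⟨t, ht⟩ := Option.ne_none_iff_exists'.mp (Finset.mem_filter.mp hw).2
  simpa [ht] using h _ List.length_ofFn t ht

end Run

theorem stmt6_general {α V : Type*} [Fintype α]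
    (δ : V → α → Option V) (𝔰 : V) (K m : ℕ)
    (h : ∀ w : List α, K ≤ w.length → ∀ t : V, reach δ 𝔰 w = some t →
      m ≤ outDeg δ t)
    (L : ℕ) (hL : K ≤ L) :
    acceptedCount δ 𝔰 K * m ^ (L - K) ≤ acceptedCount δ 𝔰 L := by
  induction L, hL using Nat.le_induction with
  | base => simp
  | succ n hKn ih =>
    calc acceptedCount δ 𝔰 K * m ^ (n + 1 - K)
        = acceptedCount δ 𝔰 K * m ^ (n - K) * m := by
          rw [Nat.sub_add_comm hKn, pow_succ, mul_assoc]
      _ ≤ acceptedCount δ 𝔰 n * m := Nat.mul_le_mul_right m ih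
      _ ≤ acceptedCount δ 𝔰 (n + 1) :=
        acceptedCount_mul_le_acceptedCount_succ δ 𝔰 n m fun w hw => h w (hw ▸ hKn)

/-- if every state reached from `𝔰` by a word of length `≥ K` has
out-degree at least `m`, then for every `L ≥ K` the number of accepted words of
length `L` is at least the number of accepted words of length `K` times `m^(L−K)`. -/
theorem stmt6 {α V : Type*} [Fintype α] [Fintype V]
    (δ : V → α → Option V) (𝔰 : V) (K m : ℕ)
    (h : ∀ w : List α, K ≤ w.length → ∀ t : V, reach δ 𝔰 w = some t →
      m ≤ outDeg δ t)
    (L : ℕ) (hL : K ≤ L) :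
    acceptedCount δ 𝔰 K * m ^ (L - K) ≤ acceptedCount δ 𝔰 L :=
  stmt6_general δ 𝔰 K m h L hL
end
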